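/- Let α ∈ ℝ, let T ⊆ ℝ² be a finite nonempty set, and let r ∈ ℝ². Let p ∈ T be a point maximizing y_p − α x_p over T (the topmost halfline with respect to slope α) and q ∈ T a point minimizing y_q − α x_q (the bottommost halfline). Let H_r := { u ∈ ℝ² : ⟨u − r, (1, α)⟩ ≤ 0 } be the closed halfplane on the leftward side of the line through r perpendicular to direction (1, α). Then h_{←^α T}(r) = max{ h_{←^α p}(r), h_{←^α q}(r), sup_{s ∈ convexHull(T) ∩ H_r} ‖s − r‖ }, where the supremum over the empty set is taken to be 0. -/

import Mathlib

open Metric Set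

noncomputable section

/-- Points of the Euclidean plane ℝ². -/
abbrev Pt : Type := EuclideanSpace ℝ (Fin 2)

/-- The point (x, y) ∈ ℝ². -/
def pt (x y : ℝ) : Pt := (WithLp.equiv 2 (Fin 2 → ℝ)).symm ![x, y]

/-- The leftward horizontal halfline ←p = {(x, y_p) : x ≤ x_p}. -/
def leftRay (p : Pt) : Set Pt := {z : Pt | z 1 = p 1 ∧ z 0 ≤ p 0}

/-- The rightward horizontal halfline →p = {(x, y_p) : x ≥ x_p}. -/
def rightRay (p : Pt) : Set Pt := {z : Pt | z 1 = p 1 ∧ p 0 ≤ z 0}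

/-- h_{←p}(q): Euclidean distance from q to the leftward halfline at p. -/
def hL (p q : Pt) : ℝ := infDist q (leftRay p)

/-- h_{→p}(q): Euclidean distance from q to the rightward halfline at p. -/
def hR (p q : Pt) : ℝ := infDist q (rightRay p)

/-- h_{←S}(q) = max_{p ∈ S} h_{←p}(q). -/
def hLS (S : Finset Pt) (hS : S.Nonempty) (q : Pt) : ℝ := S.sup' hS fun p => hL p q

/-- h_{→S}(q) = max_{p ∈ S} h_{→p}(q). -/
def hRS (S : Finset Pt) (hS : S.Nonempty) (q : Pt) : ℝ := S.sup' hS fun p => hR p q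

/-- δ_{pq}(y) = inf_x max{‖(x,y) − p‖, ‖(x,y) − q‖}. -/
def delta (p q : Pt) (y : ℝ) : ℝ := ⨅ x : ℝ, max ‖pt x y - p‖ ‖pt x y - q‖

/-- δ'_{pq}(y) = inf_x max{h_{←q}((x,y)), h_{→p}((x,y))}. -/
def delta' (p q : Pt) (y : ℝ) : ℝ := ⨅ x : ℝ, max (hL q (pt x y)) (hR p (pt x y))


/-- The leftward halfline of slope α at p: { p − t·(1, α) : t ≥ 0 }. -/
def leftRayA (α : ℝ) (p : Pt) : Set Pt := {z : Pt | ∃ t : ℝ, 0 ≤ t ∧ z = p - t • pt 1 α}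

/-- The rightward halfline of slope α at p: { p + t·(1, α) : t ≥ 0 }. -/
def rightRayA (α : ℝ) (p : Pt) : Set Pt := {z : Pt | ∃ t : ℝ, 0 ≤ t ∧ z = p + t • pt 1 α}

/-- h_{←^α p}(q): distance from q to the leftward halfline of slope α at p. -/
def hLA (α : ℝ) (p q : Pt) : ℝ := infDist q (leftRayA α p)

/-- h_{→^α p}(q): distance from q to the rightward halfline of slope α at p. -/
def hRA (α : ℝ) (p q : Pt) : ℝ := infDist q (rightRayA α p)

/-- h_{←^α T}(q) = max_{p ∈ T} h_{←^α p}(q). -/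
def hLAS (α : ℝ) (T : Finset Pt) (hT : T.Nonempty) (q : Pt) : ℝ :=
  T.sup' hT fun p => hLA α p q

/-- h_{→^α T}(q) = max_{p ∈ T} h_{→^α p}(q). -/
def hRAS (α : ℝ) (T : Finset Pt) (hT : T.Nonempty) (q : Pt) : ℝ :=
  T.sup' hT fun p => hRA α p q

/-- δ_{pq}(α, β) = inf_x max{‖(x, αx+β) − p‖, ‖(x, αx+β) − q‖}. -/
def deltaA (p q : Pt) (α β : ℝ) : ℝ :=
  ⨅ x : ℝ, max ‖pt x (α * x + β) - p‖ ‖pt x (α * x + β) - q‖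

/-- δ'_{pq}(α, β) = inf_x max{h_{←^α q}((x, αx+β)), h_{→^α p}((x, αx+β))}. -/
def deltaA' (p q : Pt) (α β : ℝ) : ℝ :=
  ⨅ x : ℝ, max (hLA α q (pt x (α * x + β))) (hRA α p (pt x (α * x + β)))

open RealInnerProductSpace

lemma pt_apply0 (x y : ℝ) : pt x y 0 = x := rfl
lemma pt_apply1 (x y : ℝ) : pt x y 1 = y := rfl

lemma inner_W (α : ℝ) (u : Pt) : ⟪u, pt (-α) 1⟫ = u 1 - α * u 0 := by
  simp [PiLp.inner_apply, Fin.sum_univ_two, RCLike.inner_apply, pt_apply0, pt_apply1, pt]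
  ring

lemma inner_V (α : ℝ) (u : Pt) : ⟪u, pt 1 α⟫ = u 0 + α * u 1 := by
  simp [PiLp.inner_apply, Fin.sum_univ_two, RCLike.inner_apply, pt_apply0, pt_apply1, pt]

lemma inner_VV (α : ℝ) : ⟪pt 1 α, pt 1 α⟫ = 1 + α ^ 2 := by
  rw [inner_V]; simp [pt_apply0, pt_apply1]; ring

lemma inner_VW (α : ℝ) : ⟪pt 1 α, pt (-α) 1⟫ = 0 := by
  rw [inner_W]; simp [pt_apply0, pt_apply1]

lemma inner_WW (α : ℝ) : ⟪pt (-α) 1, pt (-α) 1⟫ = 1 + α ^ 2 := by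
  rw [inner_W]; simp [pt_apply0, pt_apply1]; ring

lemma key_identity (α : ℝ) (u : Pt) :
    ⟪u, pt 1 α⟫ ^ 2 + ⟪u, pt (-α) 1⟫ ^ 2 = (1 + α ^ 2) * ‖u‖ ^ 2 := by
  rw [inner_V, inner_W, ← real_inner_self_eq_norm_sq]
  simp only [PiLp.inner_apply, Fin.sum_univ_two, RCLike.inner_apply, conj_trivial]
  ring


lemma self_mem_rightRayA (α : ℝ) (r : Pt) : r ∈ rightRayA α r :=
  ⟨0, le_refl 0, by simp⟩

lemma rightRayA_nonempty (α : ℝ) (r : Pt) : (rightRayA α r).Nonempty :=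
  ⟨r, self_mem_rightRayA α r⟩

lemma le_infDist' {s : Set Pt} (hs : s.Nonempty) {x : Pt} {a : ℝ}
    (h : ∀ y ∈ s, a ≤ dist x y) : a ≤ infDist x s := by
  by_contra hc
  push_neg at hc
  obtain ⟨y, hy, hlt⟩ := (infDist_lt_iff hs).mp hc
  exact absurd (h y hy) (not_le.mpr hlt)

/-- symmetry: distance from r to left ray at s = distance from s to right ray at r -/
lemma hLA_eq_infDist_rightRay (α : ℝ) (s r : Pt) :
    hLA α s r = infDist s (rightRayA α r) := by
  unfold hLA
  apply le_antisymm
  · apply le_infDist' (rightRayA_nonempty α r)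
    intro z hz
    obtain ⟨t, ht, rfl⟩ := hz
    have hm : s - t • pt 1 α ∈ leftRayA α s := ⟨t, ht, rfl⟩
    calc infDist r (leftRayA α s) ≤ dist r (s - t • pt 1 α) := infDist_le_dist_of_mem hm
    _ = dist s (r + t • pt 1 α) := by
        rw [dist_eq_norm, dist_eq_norm]
        rw [show r - (s - t • pt 1 α) = -(s - (r + t • pt 1 α)) by abel, norm_neg]
  · apply le_infDist' (s := leftRayA α s) ⟨s, ⟨0, le_refl 0, by simp⟩⟩
    intro z hz
    obtain ⟨t, ht, rfl⟩ := hz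
    have hm : r + t • pt 1 α ∈ rightRayA α r := ⟨t, ht, rfl⟩
    calc infDist s (rightRayA α r) ≤ dist s (r + t • pt 1 α) := infDist_le_dist_of_mem hm
    _ = dist r (s - t • pt 1 α) := by
        rw [dist_eq_norm, dist_eq_norm]
        rw [show s - (r + t • pt 1 α) = -(r - (s - t • pt 1 α)) by abel, norm_neg]

lemma convexOn_infDist_ray (α : ℝ) (r : Pt) :
    ConvexOn ℝ univ (fun s : Pt => infDist s (rightRayA α r)) := by
  refine ⟨convex_univ, ?_⟩
  intro x _ y _ a b ha hb hab
  refine le_of_forall_pos_le_add fun ε hε => ?_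
  obtain ⟨zx, hzx, hdx⟩ := (infDist_lt_iff (rightRayA_nonempty α r)).mp
    (lt_add_of_pos_right (infDist x (rightRayA α r)) hε)
  obtain ⟨zy, hzy, hdy⟩ := (infDist_lt_iff (rightRayA_nonempty α r)).mp
    (lt_add_of_pos_right (infDist y (rightRayA α r)) hε)
  obtain ⟨tx, htx, rfl⟩ := hzx
  obtain ⟨ty, hty, rfl⟩ := hzy
  have hmem : r + (a * tx + b * ty) • pt 1 α ∈ rightRayA α r :=
    ⟨a * tx + b * ty, by positivity, rfl⟩
  have h1 : infDist (a • x + b • y) (rightRayA α r)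
      ≤ dist (a • x + b • y) (r + (a * tx + b * ty) • pt 1 α) :=
    infDist_le_dist_of_mem hmem
  have h2 : dist (a • x + b • y) (r + (a * tx + b * ty) • pt 1 α)
      ≤ a * dist x (r + tx • pt 1 α) + b * dist y (r + ty • pt 1 α) := by
    rw [dist_eq_norm, dist_eq_norm, dist_eq_norm]
    have : a • x + b • y - (r + (a * tx + b * ty) • pt 1 α)
        = a • (x - (r + tx • pt 1 α)) + b • (y - (r + ty • pt 1 α)) := by
      have hr : r = a • r + b • r := by rw [← add_smul, hab, one_smul]
      rw [smul_sub, smul_sub, smul_add, smul_add, smul_smul, smul_smul, add_smul]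
      nth_rewrite 1 [hr]
      abel
    rw [this]
    calc ‖a • (x - (r + tx • pt 1 α)) + b • (y - (r + ty • pt 1 α))‖
        ≤ ‖a • (x - (r + tx • pt 1 α))‖ + ‖b • (y - (r + ty • pt 1 α))‖ := norm_add_le _ _
      _ = a * ‖x - (r + tx • pt 1 α)‖ + b * ‖y - (r + ty • pt 1 α)‖ := by
          rw [norm_smul, norm_smul, Real.norm_eq_abs, Real.norm_eq_abs,
            abs_of_nonneg ha, abs_of_nonneg hb]
  have h3 := h1.trans h2
  simp only [smul_eq_mul]
  nlinarith [mul_le_mul_of_nonneg_left hdx.le ha, mul_le_mul_of_nonneg_left hdy.le hb]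

lemma infDist_ray_of_le (α : ℝ) (r s : Pt) (h : ⟪s - r, pt 1 α⟫ ≤ 0) :
    infDist s (rightRayA α r) = ‖s - r‖ := by
  apply le_antisymm
  · rw [← dist_eq_norm]
    exact infDist_le_dist_of_mem (self_mem_rightRayA α r)
  · apply le_infDist' (rightRayA_nonempty α r)
    intro z hz
    obtain ⟨t, ht, rfl⟩ := hz
    rw [dist_eq_norm]
    have key : ‖s - (r + t • pt 1 α)‖ ^ 2 = ‖s - r‖ ^ 2 - 2 * (t * ⟪s - r, pt 1 α⟫)
        + t ^ 2 * (1 + α ^ 2) := by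
      rw [show s - (r + t • pt 1 α) = (s - r) - t • pt 1 α by abel]
      rw [norm_sub_sq_real, real_inner_smul_right, norm_smul, Real.norm_eq_abs,
        mul_pow, sq_abs]
      have : ‖pt 1 α‖ ^ 2 = 1 + α ^ 2 := by
        rw [← real_inner_self_eq_norm_sq, inner_VV]
      rw [this]
    nlinarith [norm_nonneg (s - (r + t • pt 1 α)), norm_nonneg (s - r),
      mul_nonneg ht (neg_nonneg.mpr h), sq_nonneg t, sq_nonneg α]

lemma perp_le_infDist_ray (α : ℝ) (r s : Pt) :
    |⟪s - r, pt (-α) 1⟫| / Real.sqrt (1 + α ^ 2) ≤ infDist s (rightRayA α r) := by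
  have hpos : (0:ℝ) < Real.sqrt (1 + α ^ 2) := Real.sqrt_pos.mpr (by positivity)
  have hW : ‖pt (-α) 1‖ = Real.sqrt (1 + α ^ 2) := by
    rw [norm_eq_sqrt_real_inner, inner_WW]
  apply le_infDist' (rightRayA_nonempty α r)
  intro z hz
  obtain ⟨t, ht, rfl⟩ := hz
  rw [div_le_iff₀ hpos, dist_eq_norm]
  have heq : ⟪(s - r) - t • pt 1 α, pt (-α) 1⟫ = ⟪s - r, pt (-α) 1⟫ := by
    rw [inner_sub_left, real_inner_smul_left, inner_VW]
    ring
  rw [show s - (r + t • pt 1 α) = (s - r) - t • pt 1 α by abel, ← heq, ← hW]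
  exact abs_real_inner_le_norm _ _

lemma infDist_ray_le_perp (α : ℝ) (r s : Pt) (h : 0 ≤ ⟪s - r, pt 1 α⟫) :
    infDist s (rightRayA α r) ≤ |⟪s - r, pt (-α) 1⟫| / Real.sqrt (1 + α ^ 2) := by
  have hk : (0:ℝ) < 1 + α ^ 2 := by positivity
  set t : ℝ := ⟪s - r, pt 1 α⟫ / (1 + α ^ 2) with hts
  have ht : 0 ≤ t := div_nonneg h hk.le
  have hmem : r + t • pt 1 α ∈ rightRayA α r := ⟨t, ht, rfl⟩
  refine (infDist_le_dist_of_mem hmem).trans (le_of_eq ?_)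
  rw [dist_eq_norm]
  have hsq : ‖s - (r + t • pt 1 α)‖ ^ 2 = ⟪s - r, pt (-α) 1⟫ ^ 2 / (1 + α ^ 2) := by
    rw [show s - (r + t • pt 1 α) = (s - r) - t • pt 1 α by abel]
    rw [norm_sub_sq_real, real_inner_smul_right, norm_smul, Real.norm_eq_abs,
      mul_pow, sq_abs]
    have h1 : ‖pt 1 α‖ ^ 2 = 1 + α ^ 2 := by
      rw [← real_inner_self_eq_norm_sq, inner_VV]
    rw [h1]
    have key := key_identity α (s - r)
    rw [hts]
    set c := ⟪s - r, pt 1 α⟫ with hc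
    set d := ⟪s - r, pt (-α) 1⟫ with hd
    field_simp
    linear_combination -key
  calc ‖s - (r + t • pt 1 α)‖ = Real.sqrt (‖s - (r + t • pt 1 α)‖ ^ 2) :=
        (Real.sqrt_sq (norm_nonneg _)).symm
    _ = Real.sqrt (⟪s - r, pt (-α) 1⟫ ^ 2 / (1 + α ^ 2)) := by rw [hsq]
    _ = |⟪s - r, pt (-α) 1⟫| / Real.sqrt (1 + α ^ 2) := by
        rw [Real.sqrt_div (sq_nonneg _), Real.sqrt_sq_eq_abs]

theorem stmt_13 (α : ℝ) (T : Finset Pt) (hT : T.Nonempty) (r : Pt)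
    (p : Pt) (hp : p ∈ T) (hpmax : ∀ s ∈ T, s 1 - α * s 0 ≤ p 1 - α * p 0)
    (q : Pt) (hq : q ∈ T) (hqmin : ∀ s ∈ T, q 1 - α * q 0 ≤ s 1 - α * s 0) :
    hLAS α T hT r =
      max (hLA α p r) (max (hLA α q r)
        (sSup ((fun s => ‖s - r‖) ''
          (convexHull ℝ (T : Set Pt) ∩
            {u : Pt | inner (𝕜 := ℝ) (u - r) (pt 1 α) ≤ (0 : ℝ)})))) := by
  have hbdd : BddAbove ((fun s => ‖s - r‖) ''
      (convexHull ℝ (T : Set Pt) ∩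
        {u : Pt | inner (𝕜 := ℝ) (u - r) (pt 1 α) ≤ (0 : ℝ)})) := by
    have hc : IsCompact (convexHull ℝ (T : Set Pt)) := T.finite_toSet.isCompact_convexHull ℝ
    have hb : BddAbove ((fun s => ‖s - r‖) '' (convexHull ℝ (T : Set Pt))) :=
      (hc.image (by continuity)).bddAbove
    exact hb.mono (image_mono inter_subset_left)
  have hnn : 0 ≤ hLAS α T hT r := le_trans infDist_nonneg (Finset.le_sup' (fun s => hLA α s r) hp)
  apply le_antisymm
  · apply Finset.sup'_le
    intro s hs
    by_cases hcase : ⟪s - r, pt 1 α⟫ ≤ 0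
    · rw [hLA_eq_infDist_rightRay, infDist_ray_of_le α r s hcase]
      have hmem : ‖s - r‖ ∈ (fun s => ‖s - r‖) ''
          (convexHull ℝ (T : Set Pt) ∩
            {u : Pt | inner (𝕜 := ℝ) (u - r) (pt 1 α) ≤ (0 : ℝ)}) :=
        ⟨s, ⟨subset_convexHull ℝ _ (by exact_mod_cast hs), hcase⟩, rfl⟩
      exact le_trans (le_csSup hbdd hmem) (le_trans (le_max_right _ _) (le_max_right _ _))
    · push_neg at hcase
      have h2 : hLA α s r ≤ |⟪s - r, pt (-α) 1⟫| / Real.sqrt (1 + α ^ 2) := by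
        rw [hLA_eq_infDist_rightRay]
        exact infDist_ray_le_perp α r s hcase.le
      have hps : |⟪p - r, pt (-α) 1⟫| / Real.sqrt (1 + α ^ 2) ≤ hLA α p r := by
        rw [hLA_eq_infDist_rightRay]; exact perp_le_infDist_ray α r p
      have hqs : |⟪q - r, pt (-α) 1⟫| / Real.sqrt (1 + α ^ 2) ≤ hLA α q r := by
        rw [hLA_eq_infDist_rightRay]; exact perp_le_infDist_ray α r q
      have hop : ⟪s - r, pt (-α) 1⟫ ≤ ⟪p - r, pt (-α) 1⟫ := by
        simp only [inner_sub_left, inner_W]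
        have := hpmax s hs
        linarith
      have hoq : ⟪q - r, pt (-α) 1⟫ ≤ ⟪s - r, pt (-α) 1⟫ := by
        simp only [inner_sub_left, inner_W]
        have := hqmin s hs
        linarith
      have habs : |⟪s - r, pt (-α) 1⟫| ≤ max |⟪p - r, pt (-α) 1⟫| |⟪q - r, pt (-α) 1⟫| := by
        rcases le_total 0 (⟪s - r, pt (-α) 1⟫) with hsg | hsg
        · rw [abs_of_nonneg hsg]
          exact le_max_of_le_left (hop.trans (le_abs_self _))
        · rw [abs_of_nonpos hsg]
          exact le_max_of_le_right ((neg_le_neg hoq).trans (neg_le_abs _))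
      have hdiv : |⟪s - r, pt (-α) 1⟫| / Real.sqrt (1 + α ^ 2)
          ≤ max (hLA α p r) (hLA α q r) := by
        have hpos : (0:ℝ) < Real.sqrt (1 + α ^ 2) := Real.sqrt_pos.mpr (by positivity)
        rcases le_max_iff.mp habs with h | h
        · exact le_max_of_le_left (le_trans (div_le_div_of_nonneg_right h hpos.le) hps)
        · exact le_max_of_le_right (le_trans (div_le_div_of_nonneg_right h hpos.le) hqs)
      refine le_trans (le_trans h2 hdiv) ?_
      exact max_le (le_max_left _ _)
        (le_trans (le_max_left _ _) (le_max_right _ _))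
  · apply max_le (Finset.le_sup' (fun s => hLA α s r) hp)
    apply max_le (Finset.le_sup' (fun s => hLA α s r) hq)
    apply Real.sSup_le _ hnn
    rintro x ⟨s, ⟨hsK, hsH⟩, rfl⟩
    obtain ⟨t, htT, hle⟩ := (convexOn_infDist_ray α r).exists_ge_of_mem_convexHull
      (subset_univ _) hsK
    have hsH' : ⟪s - r, pt 1 α⟫ ≤ 0 := hsH
    rw [infDist_ray_of_le α r s hsH'] at hle
    calc ‖s - r‖ ≤ infDist t (rightRayA α r) := hle
      _ = hLA α t r := (hLA_eq_infDist_rightRay α t r).symm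
      _ ≤ hLAS α T hT r := Finset.le_sup' (fun s => hLA α s r) htT
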